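/- arXiv:2104.07026 — 8 statements merged into one kernel-verified Lean document; each statement's English description precedes it below -/
import Mathlib

section
/- For the cycle Cₙ with n ≥ 3: γ₂ᵈ(C₄) = 2, and γ₂ᵈ(Cₙ) = ⌈n/4⌉ for every n ≥ 3 with n ≠ 4. -/
def IsDisjDomSet {V : Type*} (G : SimpleGraph V) (D : Set V) : Prop :=
  ∀ v : V, v ∉ D → (∃ u ∈ D, G.Adj v u) ∨
    (∃ u ∈ D, ∃ w ∈ D, u ≠ w ∧ G.dist v u = 2 ∧ G.dist v w = 2)

noncomputable def disjDomNum {V : Type*} (G : SimpleGraph V) : ℕ :=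
  sInf {n : ℕ | ∃ D : Set V, IsDisjDomSet G D ∧ D.ncard = n}

/-!
Lower bound by discharging: a vertex `d` sends weight `2` to itself and to its neighbours and
weight `1` to the vertices at distance `2`. A disjunctive dominating set `D` gives every vertex
weight at least `2`, while in `Cₙ` each `d` sends out at most `2 · 3 + 2 = 8`; hence
`2n ≤ 8 |D|`. Upper bound: the multiples of `4` below `n` form a disjunctive dominating set of
`Cₙ` unless `n = 4`, where the vertex `2` sees only one of them at distance `2`; in `C₄` no single
vertex works either, since it is not adjacent to its antipode.
-/

open Finset
open scoped Fin.CommRing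

theorem Fin.add_natCast_ne_self {n c : ℕ} [NeZero n] (hc0 : c ≠ 0) (hc : c < n) (v : Fin n) :
    v + c ≠ v := fun h =>
  Nat.not_dvd_of_pos_of_lt (Nat.pos_of_ne_zero hc0) hc (Fin.natCast_eq_zero.mp (add_eq_left.mp h))

theorem Fin.ncard_setOf_val {n : ℕ} (p : ℕ → Prop) [DecidablePred p] :
    {v : Fin n | p v.val}.ncard = n.count p := by
  rw [Nat.count_eq_card_filter_range, ← Set.ncard_coe_finset,
    ← Set.ncard_image_of_injective _ Fin.val_injective]
  congr 1
  ext k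
  simp only [Set.mem_image, Set.mem_ofPred_eq, Finset.coe_filter, Finset.mem_range]
  exact ⟨fun ⟨v, hv, hk⟩ => hk ▸ ⟨v.isLt, hv⟩, fun ⟨hk, hp⟩ => ⟨⟨k, hk⟩, hp, rfl⟩⟩

namespace SimpleGraph

section General

variable {V : Type*} {G : SimpleGraph V}

theorem dist_eq_two_iff {u v : V} :
    G.dist u v = 2 ↔ u ≠ v ∧ ¬G.Adj u v ∧ (G.commonNeighbors u v).Nonempty := by
  rw [dist, ENat.toNat_eq_iff two_ne_zero, Nat.cast_ofNat, edist_eq_two_iff]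

variable (G)

theorem disjDomNum_eq_of_isLeast {k : ℕ}
    (h : IsLeast {n : ℕ | ∃ D : Set V, IsDisjDomSet G D ∧ D.ncard = n} k) :
    disjDomNum G = k :=
  h.csInf_eq

theorem isDisjDomSet_singleton_iff {u : V} : IsDisjDomSet G {u} ↔ ∀ v ≠ u, G.Adj v u := by
  refine ⟨fun h v hv => ?_, fun h v hv => Or.inl ⟨u, rfl, h v hv⟩⟩
  rcases h v hv with ⟨w, rfl, hw⟩ | ⟨a, rfl, b, rfl, hab, -⟩
  · exact hw
  · exact absurd rfl hab

variable [DecidableEq V] [DecidableRel G.Adj]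

noncomputable def disjDomWeight (v d : V) : ℕ :=
  if v = d ∨ G.Adj v d then 2 else if G.dist v d = 2 then 1 else 0

theorem two_le_sum_disjDomWeight {D : Finset V} (hD : IsDisjDomSet G D) (v : V) :
    2 ≤ ∑ d ∈ D, G.disjDomWeight v d := by
  have single : ∀ u ∈ D, v = u ∨ G.Adj v u → 2 ≤ ∑ d ∈ D, G.disjDomWeight v d := fun u hu h =>
    calc 2 = G.disjDomWeight v u := by simp [disjDomWeight, h]
      _ ≤ _ := single_le_sum (fun _ _ => Nat.zero_le _) hu
  by_cases hv : v ∈ D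
  · exact single v hv (Or.inl rfl)
  rcases hD v (by simpa using hv) with ⟨u, hu, hadj⟩ | ⟨u, hu, w, hw, hne, hu2, hw2⟩
  · exact single u hu (Or.inr hadj)
  · have one_le : ∀ x, G.dist v x = 2 → 1 ≤ G.disjDomWeight v x := fun x hx => by
      unfold disjDomWeight; split_ifs <;> simp_all
    calc 2 ≤ G.disjDomWeight v u + G.disjDomWeight v w := by
          have := one_le u hu2; have := one_le w hw2; omega
      _ = ∑ d ∈ {u, w}, G.disjDomWeight v d := (sum_pair hne).symm
      _ ≤ _ := sum_le_sum_of_subset (by simpa [insert_subset_iff] using ⟨hu, hw⟩)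

variable [Fintype V]

theorem sum_disjDomWeight_le (d : V) :
    ∑ v, G.disjDomWeight v d ≤ 2 * (G.degree d + 1) + #{v | G.dist v d = 2} := by
  have pointwise : ∀ v, G.disjDomWeight v d ≤
      2 * (if v = d then 1 else 0) + 2 * (if G.Adj d v then 1 else 0) +
        (if G.dist v d = 2 then 1 else 0) := fun v => by
    unfold disjDomWeight; split_ifs <;> simp_all [G.adj_comm]
  calc ∑ v, G.disjDomWeight v d ≤ _ := sum_le_sum fun v _ => pointwise v
    _ = _ := by
      simp only [sum_add_distrib, ← mul_sum, sum_ite_eq', mem_univ, if_true, sum_boole,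
        Nat.cast_id, ← neighborFinset_eq_filter, card_neighborFinset_eq_degree]
      ring

theorem two_mul_card_le_of_isDisjDomSet {c : ℕ}
    (hc : ∀ d, 2 * (G.degree d + 1) + #{v | G.dist v d = 2} ≤ c)
    {D : Finset V} (hD : IsDisjDomSet G D) : 2 * Fintype.card V ≤ c * #D :=
  calc 2 * Fintype.card V = ∑ _v : V, 2 := by simp [mul_comm]
    _ ≤ ∑ v, ∑ d ∈ D, G.disjDomWeight v d := sum_le_sum fun v _ => G.two_le_sum_disjDomWeight hD v
    _ = ∑ d ∈ D, ∑ v, G.disjDomWeight v d := sum_comm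
    _ ≤ ∑ _d ∈ D, c := sum_le_sum fun d _ => (G.sum_disjDomWeight_le d).trans (hc d)
    _ = c * #D := by simp [mul_comm]

end General

section Cycle

variable {n : ℕ} [NeZero n]

theorem cycleGraph_adj_iff (hn : 2 ≤ n) {u v : Fin n} :
    (cycleGraph n).Adj u v ↔ v = u + 1 ∨ u = v + 1 := by
  obtain ⟨k, rfl⟩ := Nat.exists_eq_add_of_le' hn
  rw [cycleGraph_adj, sub_eq_iff_eq_add', sub_eq_iff_eq_add', or_comm, add_comm u, add_comm v]

theorem eq_add_two_of_cycleGraph_dist_eq_two (hn : 2 ≤ n) {u v : Fin n}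
    (h : (cycleGraph n).dist u v = 2) : v = u + 2 ∨ u = v + 2 := by
  obtain ⟨huv, -, x, hux, hxv⟩ := dist_eq_two_iff.mp h
  rw [mem_neighborSet, cycleGraph_adj_iff hn] at hux hxv
  rcases hux with rfl | rfl <;> rcases hxv with h | h
  · exact absurd (by linear_combination h) huv
  · exact Or.inl (by linear_combination h)
  · exact Or.inr (by linear_combination h)
  · exact absurd (by linear_combination -h) huv

theorem card_filter_cycleGraph_dist_eq_two_le (hn : 2 ≤ n) (d : Fin n) :
    #{v | (cycleGraph n).dist v d = 2} ≤ 2 := by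
  calc #{v | (cycleGraph n).dist v d = 2} ≤ #{d + 2, d - 2} := card_le_card fun v hv => by
        rcases eq_add_two_of_cycleGraph_dist_eq_two hn (mem_filter.mp hv).2 with h | h <;>
          simp [h]
    _ ≤ 2 := card_le_two

theorem cycleGraph_dist_add_two (hn : 5 ≤ n) (v : Fin n) :
    (cycleGraph n).dist v (v + 2) = 2 := by
  refine dist_eq_two_iff.mpr ⟨fun h => ?_, fun h => ?_, v + 1, ?_⟩
  · exact Fin.add_natCast_ne_self (c := 2) two_ne_zero (by omega) v (by push_cast; exact h.symm)
  · rcases (cycleGraph_adj_iff (by omega)).mp h with h | h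
    · exact Fin.add_natCast_ne_self (c := 1) one_ne_zero (by omega) (v + 1)
        (by push_cast; linear_combination h)
    · exact Fin.add_natCast_ne_self (c := 3) three_ne_zero (by omega) v
        (by push_cast; linear_combination -h)
  · rw [mem_commonNeighbors, cycleGraph_adj_iff (by omega), cycleGraph_adj_iff (by omega)]
    exact ⟨Or.inl rfl, Or.inr (by ring)⟩

theorem le_four_mul_ncard_of_isDisjDomSet_cycleGraph (hn : 3 ≤ n) {D : Set (Fin n)}
    (hD : IsDisjDomSet (cycleGraph n) D) : n ≤ 4 * D.ncard := by
  obtain ⟨F, rfl⟩ := D.toFinite.exists_finset_coe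
  have hdeg : ∀ d : Fin n, (cycleGraph n).degree d = 2 := by
    obtain ⟨k, rfl⟩ := Nat.exists_eq_add_of_le' hn
    exact fun d => cycleGraph_degree_three_le
  have := (cycleGraph n).two_mul_card_le_of_isDisjDomSet (c := 8) (fun d => by
    have := card_filter_cycleGraph_dist_eq_two_le (by omega) d
    rw [hdeg]; omega) hD
  rw [Fintype.card_fin] at this
  rw [Set.ncard_coe_finset]
  omega

theorem isDisjDomSet_cycleGraph_modEq_four (hn : 3 ≤ n) (hn4 : n ≠ 4) :
    IsDisjDomSet (cycleGraph n) {v | v.val ≡ 0 [MOD 4]} := by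
  have val_add_one : ∀ v : Fin n,
      (v + 1).val = if n ≤ v.val + 1 then v.val + 1 - n else v.val + 1 :=
    fun v => by rw [Fin.val_add_eq_ite, Fin.val_one', Nat.mod_eq_of_lt (by omega)]
  have val_add_two : ∀ v : Fin n,
      (v + 2).val = if n ≤ v.val + 2 then v.val + 2 - n else v.val + 2 :=
    fun v => by rw [Fin.val_add_eq_ite, Fin.coe_ofNat_eq_mod, Nat.mod_eq_of_lt (by omega)]
  intro v hv
  simp only [Set.mem_ofPred_eq, Nat.ModEq] at hv ⊢
  have hvn := v.isLt
  by_cases h1 : v.val % 4 = 1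
  · obtain ⟨u, hu⟩ : ∃ u : Fin n, u.val = v.val - 1 := ⟨⟨v.val - 1, by omega⟩, rfl⟩
    have hvu : v = u + 1 := Fin.ext (by rw [val_add_one]; split_ifs <;> omega)
    exact Or.inl ⟨u, by omega, (cycleGraph_adj_iff (by omega)).mpr (Or.inr hvu)⟩
  by_cases h3 : v.val % 4 = 3 ∨ v.val + 1 = n
  · refine Or.inl ⟨v + 1, ?_, (cycleGraph_adj_iff (by omega)).mpr (Or.inl rfl)⟩
    rw [val_add_one]; split_ifs <;> omega
  · obtain ⟨u, hu⟩ : ∃ u : Fin n, u.val = v.val - 2 := ⟨⟨v.val - 2, by omega⟩, rfl⟩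
    have hvu : v = u + 2 := Fin.ext (by rw [val_add_two]; split_ifs <;> omega)
    have hn5 : 5 ≤ n := by omega
    refine Or.inr ⟨u, by omega, v + 2, ?_, fun h => ?_, ?_, cycleGraph_dist_add_two hn5 v⟩
    · rw [val_add_two]; split_ifs <;> omega
    · have := congrArg Fin.val h
      rw [val_add_two] at this; split_ifs at this <;> omega
    · rw [dist_comm, hvu]; exact cycleGraph_dist_add_two hn5 u

theorem disjDomNum_cycleGraph_eq_count (hn : 3 ≤ n) (hn4 : n ≠ 4) :
    disjDomNum (cycleGraph n) = n.count (· ≡ 0 [MOD 4]) := by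
  refine disjDomNum_eq_of_isLeast _
    ⟨⟨_, isDisjDomSet_cycleGraph_modEq_four hn hn4, Fin.ncard_setOf_val (· ≡ 0 [MOD 4])⟩, ?_⟩
  rintro _ ⟨D, hD, rfl⟩
  have := le_four_mul_ncard_of_isDisjDomSet_cycleGraph hn hD
  rw [Nat.count_modEq_card _ (by norm_num)]
  split_ifs <;> omega

end Cycle

theorem disjDomNum_cycleGraph_four : disjDomNum (cycleGraph 4) = 2 := by
  refine disjDomNum_eq_of_isLeast _ ⟨⟨{0, 1}, fun v hv => Or.inl ?_, Set.ncard_pair (by decide)⟩, ?_⟩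
  · simp only [Set.mem_insert_iff, Set.mem_singleton_iff, exists_eq_or_imp, exists_eq_left]
    revert v; decide
  · rintro _ ⟨D, hD, rfl⟩
    have := le_four_mul_ncard_of_isDisjDomSet_cycleGraph (by norm_num) hD
    by_contra! hlt
    obtain ⟨u, rfl⟩ := Set.ncard_eq_one.mp (by omega : D.ncard = 1)
    have key : ∀ u : Fin 4, u + 2 ≠ u ∧ ¬(cycleGraph 4).Adj (u + 2) u := by decide
    exact (key u).2 ((isDisjDomSet_singleton_iff _).mp hD _ (key u).1)

end SimpleGraph

/-- For the cycle `Cₙ` with `n ≥ 3`: `γ₂ᵈ(C₄) = 2`, and `γ₂ᵈ(Cₙ) = ⌈n/4⌉` whenever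
`n ≥ 3` and `n ≠ 4`. -/
theorem disjDomNum_cycleGraph :
    disjDomNum (SimpleGraph.cycleGraph 4) = 2 ∧
    ∀ n : ℕ, 3 ≤ n → n ≠ 4 →
      (disjDomNum (SimpleGraph.cycleGraph n) : ℤ) = ⌈(n : ℚ) / 4⌉ := by
  refine ⟨SimpleGraph.disjDomNum_cycleGraph_four, fun n hn hn4 => ?_⟩
  have : NeZero n := ⟨by omega⟩
  rw [SimpleGraph.disjDomNum_cycleGraph_eq_count hn hn4,
    Nat.count_modEq_card_eq_ceil _ (by norm_num : 0 < 4)]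
  simp
end

section
/- For every graph G and every edge e of G, γ₂ᵈ(G) ≤ γ₂ᵈ(G − e), where G − e denotes the graph obtained from G by deleting the edge e. -/
lemma dist_cases {V : Type*} {G G' : SimpleGraph V} (hle : G' ≤ G) {v u : V}
    (h : G'.dist v u = 2) : G.Adj v u ∨ G.dist v u = 2 := by
  have hne : v ≠ u := by
    rintro rfl; simp [SimpleGraph.dist_self] at h
  have hreach : G'.Reachable v u := by
    by_contra hr
    rw [SimpleGraph.dist_eq_zero_of_not_reachable hr] at h
    simp at h
  obtain ⟨p, hp⟩ := hreach.exists_walk_length_eq_dist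
  have hd : G.dist v u ≤ 2 := by
    have := G.dist_le (p.mapLe hle)
    rwa [SimpleGraph.Walk.length_map, hp, h] at this
  have hpos : 1 ≤ G.dist v u := by
    have : G.dist v u ≠ 0 := by
      intro h0
      rcases SimpleGraph.dist_eq_zero_iff_eq_or_not_reachable.mp h0 with h'|h'
      · exact hne h'
      · exact h' (hreach.mono hle)
    omega
  interval_cases hdv : G.dist v u
  · exact Or.inl (SimpleGraph.dist_eq_one_iff_adj.mp hdv)
  · exact Or.inr rfl

/-- For every graph `G` and every edge `e` of `G`,
`γ₂ᵈ(G) ≤ γ₂ᵈ(G − e)`, where `G − e` is obtained from `G` by deleting the edge `e`. -/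
theorem disjDomNum_le_disjDomNum_deleteEdge {V : Type*} [Fintype V] (G : SimpleGraph V)
    (e : Sym2 V) (he : e ∈ G.edgeSet) :
    disjDomNum G ≤ disjDomNum (G.deleteEdges {e}) := by
  have hsub : {n : ℕ | ∃ D : Set V, IsDisjDomSet (G.deleteEdges {e}) D ∧ D.ncard = n} ⊆
      {n : ℕ | ∃ D : Set V, IsDisjDomSet G D ∧ D.ncard = n} := by
    rintro n ⟨D, hD, rfl⟩
    refine ⟨D, fun v hv => ?_, rfl⟩
    have hle : G.deleteEdges {e} ≤ G := SimpleGraph.deleteEdges_le _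
    rcases hD v hv with ⟨u, hu, hadj⟩ | ⟨u, hu, w, hw, huw, h1, h2⟩
    · exact Or.inl ⟨u, hu, hle hadj⟩
    · rcases dist_cases hle h1 with ha | h1'
      · exact Or.inl ⟨u, hu, ha⟩
      rcases dist_cases hle h2 with ha | h2'
      · exact Or.inl ⟨w, hw, ha⟩
      exact Or.inr ⟨u, hu, w, hw, huw, h1', h2'⟩
  have hne : {n : ℕ | ∃ D : Set V, IsDisjDomSet (G.deleteEdges {e}) D ∧ D.ncard = n}.Nonempty :=
    ⟨(Set.univ : Set V).ncard, Set.univ, fun v hv => absurd (Set.mem_univ v) hv, rfl⟩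
  exact Nat.sInf_le (hsub (Nat.sInf_mem hne))
end

section
/- Let G be a connected graph, let uv be an edge of G, and let G′ be the graph obtained from G by subdividing the edge uv three times. If γ₂ᵈ(G) ≤ |V(G)|/3, then γ₂ᵈ(G′) ≤ |V(G′)|/3. -/
/-- The graph obtained from `G` by subdividing the edge `uv` three times: the edge `uv`
is replaced by the path `u – x₁ – x₂ – x₃ – v` through three new vertices
`x₁ = Sum.inr 0`, `x₂ = Sum.inr 1`, `x₃ = Sum.inr 2`. -/
def subdivideThrice {V : Type*} (G : SimpleGraph V) (u v : V) :
    SimpleGraph (V ⊕ Fin 3) :=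
  SimpleGraph.fromRel (fun a b =>
    (∃ x y : V, a = Sum.inl x ∧ b = Sum.inl y ∧ G.Adj x y ∧
      ¬(x = u ∧ y = v) ∧ ¬(x = v ∧ y = u)) ∨
    (a = Sum.inl u ∧ b = Sum.inr 0) ∨
    (a = Sum.inr 0 ∧ b = Sum.inr 1) ∨
    (a = Sum.inr 1 ∧ b = Sum.inr 2) ∨
    (a = Sum.inr 2 ∧ b = Sum.inl v))

/-!
Every 2DD-set `D` of `G` becomes a 2DD-set of the subdivided graph after adding one of the three
new vertices `x₁, x₂, x₃`, so `γ₂ᵈ(G') ≤ γ₂ᵈ(G) + 1 ≤ (|V(G)| + 3) / 3`. Away from the new path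
nothing is lost: `inl` embeds `G - uv` as an induced subgraph of `G'`, so adjacencies and
distance-two witnesses of `G` that avoid the edge `uv` survive. The added vertex repairs the
witnesses that used `uv`: take `x₂` if `u, v ∈ D`, or if `u, v ∉ D` and neither has a neighbour
in `D`; take `x₃` if `u ∈ D` and `v ∉ D`; take `x₁` if `u, v ∉ D` and `v` has a neighbour in `D`.
The remaining cases are the mirror images of these under the swap `u ↔ v`, `xᵢ ↔ x₄₋ᵢ`.
-/

open Sum

namespace SimpleGraph

variable {W W' : Type*} {H K : SimpleGraph W} {H' : SimpleGraph W'} {a b c : W}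

lemma dist_eq_two_iff_s5 :
    H.dist a c = 2 ↔ a ≠ c ∧ ¬H.Adj a c ∧ ∃ b, H.Adj a b ∧ H.Adj b c := by
  have : H.dist a c = 2 ↔ H.edist a c = 2 := by
    refine ⟨fun h => ?_, fun h => ?_⟩
    · rw [← (Reachable.of_dist_ne_zero (h ▸ two_ne_zero)).coe_dist_eq_edist, h]; rfl
    · rw [← (reachable_of_edist_ne_top (h ▸ ENat.natCast_ne_top 2)).coe_dist_eq_edist] at h
      exact_mod_cast h
  simp [this, edist_eq_two_iff, Set.Nonempty, mem_commonNeighbors, H.adj_comm c]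

lemma dist_eq_two_of_adj_of_adj (hab : H.Adj a b) (hbc : H.Adj b c) (hac : ¬H.Adj a c)
    (hne : a ≠ c) : H.dist a c = 2 :=
  dist_eq_two_iff_s5.mpr ⟨hne, hac, b, hab, hbc⟩

lemma Embedding.dist_eq_two (f : H ↪g H') (h : H.dist a c = 2) : H'.dist (f a) (f c) = 2 := by
  obtain ⟨hne, hac, b, hab, hbc⟩ := dist_eq_two_iff_s5.mp h
  exact dist_eq_two_of_adj_of_adj (f.map_adj_iff.mpr hab) (f.map_adj_iff.mpr hbc)
    (f.map_adj_iff.not.mpr hac) (f.injective.ne hne)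

lemma dist_eq_two_of_le (hK : K ≤ H) (h : H.dist a c = 2) (hab : K.Adj a b)
    (hbc : K.Adj b c) : K.dist a c = 2 := by
  obtain ⟨hne, hac, -⟩ := dist_eq_two_iff_s5.mp h
  exact dist_eq_two_of_adj_of_adj hab hbc (fun h => hac (hK h)) hne

lemma dist_deleteEdges_eq_two {e : Sym2 W} (h : H.dist a c = 2) (ha : a ∉ e) (hc : c ∉ e) :
    (H.deleteEdges {e}).dist a c = 2 := by
  obtain ⟨-, -, b, hab, hbc⟩ := dist_eq_two_iff_s5.mp h
  have hab' : s(a, b) ≠ e := fun h => ha (h ▸ Sym2.mem_mk_left a b)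
  have hbc' : s(b, c) ≠ e := fun h => hc (h ▸ Sym2.mem_mk_right b c)
  exact dist_eq_two_of_le (H.deleteEdges_le _) h (by simpa using ⟨hab, hab'⟩)
    (by simpa using ⟨hbc, hbc'⟩)

end SimpleGraph

def IsDisjDominated {W : Type*} (H : SimpleGraph W) (D : Set W) (x : W) : Prop :=
  (∃ y ∈ D, H.Adj x y) ∨ ∃ y ∈ D, ∃ z ∈ D, y ≠ z ∧ H.dist x y = 2 ∧ H.dist x z = 2

section Domination

open SimpleGraph

variable {W W' : Type*} {H : SimpleGraph W} {H' : SimpleGraph W'} {D E : Set W} {x : W}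

lemma IsDisjDomSet.isDisjDominated (hD : IsDisjDomSet H D) (hx : x ∉ D) :
    IsDisjDominated H D x :=
  hD x hx

lemma IsDisjDominated.mono (h : IsDisjDominated H D x) (hDE : D ⊆ E) :
    IsDisjDominated H E x := by
  rcases h with ⟨y, hy, hxy⟩ | ⟨y, hy, z, hz, hyz, hxy, hxz⟩
  exacts [.inl ⟨y, hDE hy, hxy⟩, .inr ⟨y, hDE hy, z, hDE hz, hyz, hxy, hxz⟩]

lemma IsDisjDominated.map (f : H ↪g H') (h : IsDisjDominated H D x) :
    IsDisjDominated H' (f '' D) (f x) := by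
  rcases h with ⟨y, hy, hxy⟩ | ⟨y, hy, z, hz, hyz, hxy, hxz⟩
  · exact .inl ⟨f y, Set.mem_image_of_mem f hy, f.map_adj_iff.mpr hxy⟩
  · exact .inr ⟨f y, Set.mem_image_of_mem f hy, f z, Set.mem_image_of_mem f hz,
      f.injective.ne hyz, f.dist_eq_two hxy, f.dist_eq_two hxz⟩

lemma IsDisjDomSet.image_iso (e : H ≃g H') (hD : IsDisjDomSet H D) :
    IsDisjDomSet H' (e '' D) := by
  intro x hx
  obtain ⟨x, rfl⟩ := e.surjective x
  exact (hD.isDisjDominated fun h => hx ⟨x, h, rfl⟩).map e.toEmbedding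

lemma IsDisjDominated.deleteEdges {e : Sym2 W} (h : IsDisjDominated H D x)
    (hadj : ∀ d ∈ D, H.Adj x d → s(x, d) ≠ e)
    (hpath : ∀ b, ∀ d ∈ D, H.Adj x b → H.Adj b d → s(x, b) ≠ e ∧ s(b, d) ≠ e) :
    IsDisjDominated (H.deleteEdges {e}) D x := by
  have transfer : ∀ d ∈ D, H.dist x d = 2 → (H.deleteEdges {e}).dist x d = 2 := by
    intro d hd hxd
    obtain ⟨-, -, b, hxb, hbd⟩ := dist_eq_two_iff_s5.mp hxd
    obtain ⟨hxb', hbd'⟩ := hpath b d hd hxb hbd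
    exact dist_eq_two_of_le (H.deleteEdges_le _) hxd (by simpa using ⟨hxb, hxb'⟩)
      (by simpa using ⟨hbd, hbd'⟩)
  rcases h with ⟨d, hd, hxd⟩ | ⟨d, hd, d', hd', hne, hxd, hxd'⟩
  · exact .inl ⟨d, hd, by simpa using ⟨hxd, hadj d hd hxd⟩⟩
  · exact .inr ⟨d, hd, d', hd', hne, transfer d hd hxd, transfer d' hd' hxd'⟩

end Domination

section Subdivision

open SimpleGraph

variable {V : Type*} {G : SimpleGraph V} {u v w x y : V} {i j : Fin 3} {D : Set V}

@[simp] lemma subdivideThrice_adj_inl_inl :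
    (subdivideThrice G u v).Adj (inl x) (inl y) ↔ (G.deleteEdges {s(u, v)}).Adj x y := by
  simp [subdivideThrice, G.adj_comm y x]
  grind [G.ne_of_adj]

@[simp] lemma subdivideThrice_adj_inl_inr :
    (subdivideThrice G u v).Adj (inl x) (inr i) ↔ x = u ∧ i = 0 ∨ x = v ∧ i = 2 := by
  simp [subdivideThrice, and_comm]

@[simp] lemma subdivideThrice_adj_inr_inl :
    (subdivideThrice G u v).Adj (inr i) (inl x) ↔ x = u ∧ i = 0 ∨ x = v ∧ i = 2 := by
  rw [adj_comm, subdivideThrice_adj_inl_inr]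

@[simp] lemma subdivideThrice_adj_inr_inr :
    (subdivideThrice G u v).Adj (inr i) (inr j) ↔ i.val + 1 = j.val ∨ j.val + 1 = i.val := by
  simp [subdivideThrice]
  revert i j
  decide

def subdivideThriceInl : G.deleteEdges {s(u, v)} ↪g subdivideThrice G u v :=
  ⟨Function.Embedding.inl, subdivideThrice_adj_inl_inl⟩

def subdivideThriceSwap : subdivideThrice G u v ≃g subdivideThrice G v u :=
  ⟨Equiv.sumCongr (Equiv.refl V) Fin.revPerm, by
    rintro (x | i) (y | j)
    · simp [Sym2.eq_swap (a := v)]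
    · fin_cases j <;> simp [or_comm]
    · fin_cases i <;> simp [or_comm]
    · simp only [Equiv.sumCongr_apply, Sum.map_inr, Fin.revPerm_apply, subdivideThrice_adj_inr_inr]
      revert i j
      decide⟩

lemma IsDisjDomSet.of_subdivideThrice_swap
    (h : IsDisjDomSet (subdivideThrice G v u) (insert (inr i) (inl '' D))) :
    IsDisjDomSet (subdivideThrice G u v) (insert (inr i.rev) (inl '' D)) := by
  have := h.image_iso (subdivideThriceSwap (G := G))
  rwa [Set.image_insert_eq, Set.image_image] at this

lemma subdivideThrice_dist_inl_inr_two (hwv : G.Adj w v) (hwu : w ≠ u) :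
    (subdivideThrice G u v).dist (inl w) (inr 2) = 2 :=
  dist_eq_two_of_adj_of_adj (b := inl v) (by simp [hwv, hwu, hwv.ne]) (by simp)
    (by simp [hwv.ne]) (by simp)

lemma subdivideThrice_dist_inr_zero_inr_two :
    (subdivideThrice G u v).dist (inr 0) (inr 2) = 2 :=
  dist_eq_two_of_adj_of_adj (b := inr 1) (by simp) (by simp) (by simp) (by simp)

lemma IsDisjDominated.subdivideThrice (h : IsDisjDominated (G.deleteEdges {s(u, v)}) D w)
    (i : Fin 3) :
    IsDisjDominated (subdivideThrice G u v) (insert (inr i) (inl '' D)) (inl w) :=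
  (h.map subdivideThriceInl).mono (Set.subset_insert _ _)

lemma notMem_of_inl_notMem_insert_inr (h : inl w ∉ insert (inr i) (inl '' D)) : w ∉ D :=
  fun hw => h (Set.mem_insert_of_mem _ (Set.mem_image_of_mem inl hw))

lemma isDisjDomSet_subdivideThrice_of_mem_of_mem (hD : IsDisjDomSet G D) (hu : u ∈ D)
    (hv : v ∈ D) : IsDisjDomSet (subdivideThrice G u v) (insert (inr 1) (inl '' D)) := by
  rintro (w | j) hw
  · replace hw := notMem_of_inl_notMem_insert_inr hw
    have hwu : w ≠ u := fun h => hw (h ▸ hu)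
    have hwv : w ≠ v := fun h => hw (h ▸ hv)
    by_cases hadj : G.Adj w u ∨ G.Adj w v
    · rcases hadj with h | h
      · exact .inl ⟨inl u, by simp [hu], by simp [h, hwu, hwv]⟩
      · exact .inl ⟨inl v, by simp [hv], by simp [h, hwu, hwv]⟩
    refine ((hD.isDisjDominated hw).deleteEdges ?_ ?_).subdivideThrice 1
    · intro d _ _
      simp [hwu, hwv]
    · intro b d _ hwb _
      have : b ≠ u ∧ b ≠ v :=
        ⟨by rintro rfl; exact hadj (.inl hwb), by rintro rfl; exact hadj (.inr hwb)⟩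
      simp [hwu, hwv, this]
  · fin_cases j
    · exact .inl ⟨inl u, by simp [hu], by simp⟩
    · simp at hw
    · exact .inl ⟨inl v, by simp [hv], by simp⟩

lemma isDisjDomSet_subdivideThrice_of_mem_of_notMem (hD : IsDisjDomSet G D) (hu : u ∈ D)
    (hv : v ∉ D) : IsDisjDomSet (subdivideThrice G u v) (insert (inr 2) (inl '' D)) := by
  rintro (w | j) hw
  · replace hw := notMem_of_inl_notMem_insert_inr hw
    have hwu : w ≠ u := fun h => hw (h ▸ hu)
    by_cases hwv : w = v
    · exact .inl ⟨inr 2, by simp, by simp [hwv]⟩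
    by_cases hadj : G.Adj w v
    · rcases hD.isDisjDominated hw with ⟨d, hd, hwd⟩ | ⟨d, hd, d', hd', hne, hwd, hwd'⟩
      · exact .inl ⟨inl d, by simp [hd], by simp [hwd, hwu, hwv]⟩
      -- one of the two witnesses is not `u`; it survives, and `x₃` replaces the other
      wlog hd'u : d' ≠ u generalizing d d'
      · exact this d' hd' d hd hne.symm hwd' hwd fun h => hne (h.trans (not_not.mp hd'u).symm)
      have hd'v : d' ≠ v := fun h => hv (h ▸ hd')
      refine .inr ⟨inr 2, by simp, inl d', by simp [hd'], by simp,
        subdivideThrice_dist_inl_inr_two hadj hwu, ?_⟩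
      exact subdivideThriceInl.dist_eq_two
        (dist_deleteEdges_eq_two hwd' (by simp [hwu, hwv]) (by simp [hd'u, hd'v]))
    refine ((hD.isDisjDominated hw).deleteEdges ?_ ?_).subdivideThrice 2
    · intro d _ _
      simp [hwu, hwv]
    · intro b d hd hwb _
      have hdv : d ≠ v := fun h => hv (h ▸ hd)
      have hbv : b ≠ v := by rintro rfl; exact hadj hwb
      simp [hwu, hwv, hdv, hbv]
  · fin_cases j
    · exact .inl ⟨inl u, by simp [hu], by simp⟩
    · exact .inl ⟨inr 2, by simp, by simp⟩
    · simp at hw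

lemma isDisjDomSet_subdivideThrice_of_notMem_of_adj (hD : IsDisjDomSet G D) (hu : u ∉ D)
    (hv : v ∉ D) {d₀ : V} (hd₀ : d₀ ∈ D) (hvd₀ : G.Adj v d₀) :
    IsDisjDomSet (subdivideThrice G u v) (insert (inr 0) (inl '' D)) := by
  have hD_ne : ∀ d ∈ D, d ≠ u ∧ d ≠ v := fun d hd => ⟨fun h => hu (h ▸ hd), fun h => hv (h ▸ hd)⟩
  rintro (w | j) hw
  · replace hw := notMem_of_inl_notMem_insert_inr hw
    by_cases hwu : w = u
    · exact .inl ⟨inr 0, by simp, by simp [hwu]⟩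
    by_cases hwv : w = v
    · exact .inl ⟨inl d₀, by simp [hd₀], by simp [hwv, hvd₀, (hD_ne d₀ hd₀).1, hvd₀.ne.symm]⟩
    refine ((hD.isDisjDominated hw).deleteEdges ?_ ?_).subdivideThrice 0
    · intro d _ _
      simp [hwu, hwv]
    · intro b d hd _ _
      simp [hwu, hwv, hD_ne d hd]
  · fin_cases j
    · simp at hw
    · exact .inl ⟨inr 0, by simp, by simp⟩
    · refine .inr ⟨inr 0, by simp, inl d₀, by simp [hd₀], by simp, ?_, ?_⟩
      · rw [dist_comm]
        exact subdivideThrice_dist_inr_zero_inr_two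
      · rw [dist_comm]
        exact subdivideThrice_dist_inl_inr_two hvd₀.symm (hD_ne d₀ hd₀).1

lemma isDisjDomSet_subdivideThrice_of_notMem_of_not_adj (hD : IsDisjDomSet G D) (hu : u ∉ D)
    (hv : v ∉ D) (hNu : ∀ d ∈ D, ¬G.Adj u d) (hNv : ∀ d ∈ D, ¬G.Adj v d) :
    IsDisjDomSet (subdivideThrice G u v) (insert (inr 1) (inl '' D)) := by
  have hD_ne : ∀ d ∈ D, d ≠ u ∧ d ≠ v := fun d hd => ⟨fun h => hu (h ▸ hd), fun h => hv (h ▸ hd)⟩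
  rintro (w | j) hw
  · refine ((hD.isDisjDominated (notMem_of_inl_notMem_insert_inr hw)).deleteEdges ?_ ?_)
      |>.subdivideThrice 1
    · intro d hd _
      simp [hD_ne d hd]
    · intro b d hd _ hbd
      have : b ≠ u ∧ b ≠ v := ⟨by rintro rfl; exact hNu d hd hbd, by rintro rfl; exact hNv d hd hbd⟩
      simp [hD_ne d hd, this]
  · fin_cases j
    · exact .inl ⟨inr 1, by simp, by simp⟩
    · simp at hw
    · exact .inl ⟨inr 1, by simp, by simp⟩

lemma IsDisjDomSet.exists_subdivideThrice (hD : IsDisjDomSet G D) (u v : V) :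
    ∃ i : Fin 3, IsDisjDomSet (subdivideThrice G u v) (insert (inr i) (inl '' D)) := by
  by_cases hu : u ∈ D <;> by_cases hv : v ∈ D
  · exact ⟨1, isDisjDomSet_subdivideThrice_of_mem_of_mem hD hu hv⟩
  · exact ⟨2, isDisjDomSet_subdivideThrice_of_mem_of_notMem hD hu hv⟩
  · exact ⟨_, (isDisjDomSet_subdivideThrice_of_mem_of_notMem hD hv hu).of_subdivideThrice_swap⟩
  by_cases hNv : ∃ d ∈ D, G.Adj v d
  · obtain ⟨d₀, hd₀, hvd₀⟩ := hNv
    exact ⟨0, isDisjDomSet_subdivideThrice_of_notMem_of_adj hD hu hv hd₀ hvd₀⟩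
  by_cases hNu : ∃ d ∈ D, G.Adj u d
  · obtain ⟨d₀, hd₀, hud₀⟩ := hNu
    exact ⟨_, (isDisjDomSet_subdivideThrice_of_notMem_of_adj hD hv hu hd₀ hud₀)
      |>.of_subdivideThrice_swap⟩
  push Not at hNu hNv
  exact ⟨1, isDisjDomSet_subdivideThrice_of_notMem_of_not_adj hD hu hv hNu hNv⟩

end Subdivision

section DisjDomNum

variable {V : Type*} {G : SimpleGraph V} {D : Set V}

lemma exists_isDisjDomSet_ncard_eq_disjDomNum (G : SimpleGraph V) :
    ∃ D : Set V, IsDisjDomSet G D ∧ D.ncard = disjDomNum G :=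
  Nat.sInf_mem (s := {n | ∃ D : Set V, IsDisjDomSet G D ∧ D.ncard = n})
    ⟨_, Set.univ, fun x hx => absurd (Set.mem_univ x) hx, rfl⟩

lemma disjDomNum_le_ncard (hD : IsDisjDomSet G D) : disjDomNum G ≤ D.ncard :=
  Nat.sInf_le ⟨D, hD, rfl⟩

lemma disjDomNum_subdivideThrice_le [Finite V] (G : SimpleGraph V) (u v : V) :
    disjDomNum (subdivideThrice G u v) ≤ disjDomNum G + 1 := by
  obtain ⟨D, hD, hcard⟩ := exists_isDisjDomSet_ncard_eq_disjDomNum G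
  obtain ⟨i, hi⟩ := hD.exists_subdivideThrice u v
  calc disjDomNum (subdivideThrice G u v)
      ≤ (insert (inr i) (inl '' D) : Set (V ⊕ Fin 3)).ncard := disjDomNum_le_ncard hi
    _ = disjDomNum G + 1 := by
      rw [Set.ncard_insert_of_notMem (by simp), Set.ncard_image_of_injective _ inl_injective,
        hcard]

end DisjDomNum

theorem disjDomNum_subdivideThrice_le_third_general {V : Type*} [Fintype V] (G : SimpleGraph V)
    (u v : V) (h : (disjDomNum G : ℝ) ≤ (Fintype.card V : ℝ) / 3) :
    (disjDomNum (subdivideThrice G u v) : ℝ) ≤ (Fintype.card (V ⊕ Fin 3) : ℝ) / 3 := by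
  have hle : (disjDomNum (subdivideThrice G u v) : ℝ) ≤ disjDomNum G + 1 := by
    exact_mod_cast disjDomNum_subdivideThrice_le G u v
  rw [Fintype.card_sum, Fintype.card_fin, Nat.cast_add]
  linarith

/-- If `G` is connected, `uv ∈ E(G)`, `G'` is obtained from `G` by subdividing the edge
`uv` three times and `γ₂ᵈ(G) ≤ |V(G)|/3`, then `γ₂ᵈ(G') ≤ |V(G')|/3`. -/
theorem disjDomNum_subdivideThrice_le_third {V : Type*} [Fintype V] (G : SimpleGraph V)
    (u v : V) (hconn : G.Connected) (huv : G.Adj u v)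
    (h : (disjDomNum G : ℝ) ≤ (Fintype.card V : ℝ) / 3) :
    (disjDomNum (subdivideThrice G u v) : ℝ) ≤ (Fintype.card (V ⊕ Fin 3) : ℝ) / 3 :=
  disjDomNum_subdivideThrice_le_third_general G u v h
end

section
/- Let F be any connected graph of order at least 2, and let G_F be the graph obtained from F by, for each vertex xᵢ of F, taking a graph Tᵢ isomorphic to C_{4,2} or C_{5,1} and identifying the leaf of Tᵢ with xᵢ (the copies Tᵢ being pairwise disjoint apart from their identified leaves). Then γ₂ᵈ(G_F) = |V(G_F)|/3. -/
set_option synthInstance.maxSize 1000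
set_option maxHeartbeats 1000000

/-- The tadpole graph `C_{s,k}`: a cycle on `0, …, s-1` with a pendant path
`0 – s – ⋯ – (s+k-1)`; the vertex `s+k-1` is its leaf. -/
def tadpoleGraph (s k : ℕ) : SimpleGraph (Fin (s + k)) :=
  SimpleGraph.fromRel (fun a b =>
    ((a : ℕ) + 1 = (b : ℕ) ∧ (b : ℕ) < s) ∨ ((a : ℕ) = s - 1 ∧ (b : ℕ) = 0) ∨
    ((a : ℕ) = 0 ∧ (b : ℕ) = s) ∨ (s ≤ (a : ℕ) ∧ (a : ℕ) + 1 = (b : ℕ)))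

/-- Given a graph `F` and a choice `t : V → Bool` of gadget for every vertex of `F`,
`glueGadgets F t` is the graph obtained from `F` by identifying, for every vertex `x` of
`F`, the leaf of a disjoint copy `Tₓ` of `C_{4,2}` (if `t x = true`) or of `C_{5,1}`
(if `t x = false`) with `x`.  Both `C_{4,2}` and `C_{5,1}` have `6` vertices and their
leaf has index `5`; the copy `Tₓ` lives on `{x} × Fin 6`, the identified vertex `x`
being `(x, 5)`, and the edges of `F` join the identified vertices. -/
def glueGadgets {V : Type*} (F : SimpleGraph V) (t : V → Bool) :
    SimpleGraph (V × Fin 6) :=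
  SimpleGraph.fromRel (fun a b =>
    (a.2 = (5 : Fin 6) ∧ b.2 = (5 : Fin 6) ∧ F.Adj a.1 b.1) ∨
    (a.1 = b.1 ∧
      ((t a.1 = true ∧ (tadpoleGraph 4 2).Adj a.2 b.2) ∨
       (t a.1 = false ∧ (tadpoleGraph 5 1).Adj a.2 b.2))))

namespace DisjAux

lemma d42_nb : ∀ i j : Fin 6, i ≠ 4 → i ≠ 5 → (tadpoleGraph 4 2).Adj i j → j ≠ 5 := by
  simp only [tadpoleGraph, SimpleGraph.fromRel_adj]; decide

lemma d51_nb : ∀ i j : Fin 6, i ≠ 0 → i ≠ 5 → (tadpoleGraph 5 1).Adj i j → j ≠ 5 := by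
  simp only [tadpoleGraph, SimpleGraph.fromRel_adj]; decide

lemma d42_dom : ∀ u : Fin 6,
    ¬((0 = u ∨ (tadpoleGraph 4 2).Adj 0 u) ∧ (1 = u ∨ (tadpoleGraph 4 2).Adj 1 u) ∧
      (2 = u ∨ (tadpoleGraph 4 2).Adj 2 u) ∧ (3 = u ∨ (tadpoleGraph 4 2).Adj 3 u)) := by
  simp only [tadpoleGraph, SimpleGraph.fromRel_adj]; decide

lemma d51_dom : ∀ u : Fin 6,
    ¬((1 = u ∨ (tadpoleGraph 5 1).Adj 1 u) ∧ (2 = u ∨ (tadpoleGraph 5 1).Adj 2 u) ∧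
      (3 = u ∨ (tadpoleGraph 5 1).Adj 3 u) ∧ (4 = u ∨ (tadpoleGraph 5 1).Adj 4 u)) := by
  simp only [tadpoleGraph, SimpleGraph.fromRel_adj]; decide

variable {V : Type*} {F : SimpleGraph V} {t : V → Bool}

lemma glue_adj {p q : V × Fin 6} :
    (glueGadgets F t).Adj p q ↔ p ≠ q ∧
      ((p.2 = 5 ∧ q.2 = 5 ∧ F.Adj p.1 q.1) ∨
       (p.1 = q.1 ∧ ((t p.1 = true ∧ (tadpoleGraph 4 2).Adj p.2 q.2) ∨
                     (t p.1 = false ∧ (tadpoleGraph 5 1).Adj p.2 q.2)))) := by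
  rw [glueGadgets, SimpleGraph.fromRel_adj]
  constructor
  · rintro ⟨hne, h | h⟩
    · exact ⟨hne, h⟩
    · rcases h with ⟨h5, h5', hF⟩ | ⟨hxy, ⟨ht, ha⟩ | ⟨ht, ha⟩⟩
      · exact ⟨hne, Or.inl ⟨h5', h5, hF.symm⟩⟩
      · exact ⟨hne, Or.inr ⟨hxy.symm, Or.inl ⟨hxy ▸ ht, ha.symm⟩⟩⟩
      · exact ⟨hne, Or.inr ⟨hxy.symm, Or.inr ⟨hxy ▸ ht, ha.symm⟩⟩⟩
  · rintro ⟨hne, h⟩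
    exact ⟨hne, Or.inl h⟩

lemma glue_adj_fst {p q : V × Fin 6} (h : (glueGadgets F t).Adj p q) (h5 : p.2 ≠ 5) :
    q.1 = p.1 ∧ ((t p.1 = true ∧ (tadpoleGraph 4 2).Adj p.2 q.2) ∨
                 (t p.1 = false ∧ (tadpoleGraph 5 1).Adj p.2 q.2)) := by
  rw [glue_adj] at h
  rcases h with ⟨-, ⟨h5', -, -⟩ | ⟨hxy, h⟩⟩
  · exact absurd h5' h5
  · exact ⟨hxy.symm, h⟩

lemma dist2_fst {p u : V × Fin 6}
    (hnb : ∀ q : V × Fin 6, (glueGadgets F t).Adj p q → q.2 ≠ 5)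
    (h5 : p.2 ≠ 5)
    (hd : (glueGadgets F t).dist p u = 2) : u.1 = p.1 := by
  have hne : (glueGadgets F t).dist p u ≠ 0 := by omega
  obtain ⟨w, hw⟩ := SimpleGraph.exists_walk_of_dist_ne_zero hne
  rw [hd] at hw
  cases w with
  | nil => simp at hw
  | cons h1 w1 =>
    cases w1 with
    | nil => simp at hw
    | cons h2 w2 =>
      cases w2 with
      | nil =>
        have ha := glue_adj_fst h1 h5
        have hm5 := hnb _ h1
        have hb := glue_adj_fst h2 hm5
        rw [hb.1, ha.1]
      | cons h3 w3 =>
        simp [SimpleGraph.Walk.length_cons] at hw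

lemma two_in_copy {D : Set (V × Fin 6)}
    (hD : IsDisjDomSet (glueGadgets F t) D) (x : V) :
    ∃ p ∈ D, ∃ q ∈ D, p.1 = x ∧ q.1 = x ∧ p ≠ q := by
  by_contra hcon
  push_neg at hcon
  have key : ∀ i : Fin 6, i ≠ 5 →
      (∀ j : Fin 6, ((t x = true ∧ (tadpoleGraph 4 2).Adj i j) ∨
        (t x = false ∧ (tadpoleGraph 5 1).Adj i j)) → j ≠ 5) →
      (x, i) ∈ D ∨ ∃ j : Fin 6, (x, j) ∈ D ∧
        ((t x = true ∧ (tadpoleGraph 4 2).Adj i j) ∨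
         (t x = false ∧ (tadpoleGraph 5 1).Adj i j)) := by
    intro i hi5 hnb
    by_cases hmem : (x, i) ∈ D
    · exact Or.inl hmem
    rcases hD (x, i) hmem with ⟨u, hu, hadj⟩ | ⟨u, hu, w, hw, huw, hdu, hdw⟩
    · have h := glue_adj_fst hadj hi5
      refine Or.inr ⟨u.2, ?_, h.2⟩
      have hux : u = (x, u.2) := Prod.ext_iff.mpr ⟨h.1, rfl⟩
      rwa [← hux]
    · have hadjnb : ∀ q : V × Fin 6, (glueGadgets F t).Adj (x, i) q → q.2 ≠ 5 := by
        intro q hq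
        exact hnb q.2 (glue_adj_fst hq hi5).2
      have hux : u.1 = x := dist2_fst hadjnb hi5 hdu
      have hwx : w.1 = x := dist2_fst hadjnb hi5 hdw
      exact absurd (hcon u hu w hw hux hwx) huw
  cases ht : t x with
  | true =>
    have hnb : ∀ i : Fin 6, i ≠ 4 → i ≠ 5 →
        (∀ j : Fin 6, ((t x = true ∧ (tadpoleGraph 4 2).Adj i j) ∨
          (t x = false ∧ (tadpoleGraph 5 1).Adj i j)) → j ≠ 5) := by
      intro i hi4 hi5 j h
      rcases h with ⟨-, ha⟩ | ⟨hf, -⟩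
      · exact d42_nb i j hi4 hi5 ha
      · rw [ht] at hf; exact absurd hf (by simp)
    have H0 := key 0 (by decide) (hnb 0 (by decide) (by decide))
    have H1 := key 1 (by decide) (hnb 1 (by decide) (by decide))
    have H2 := key 2 (by decide) (hnb 2 (by decide) (by decide))
    have H3 := key 3 (by decide) (hnb 3 (by decide) (by decide))
    obtain ⟨u, hu⟩ : ∃ u : Fin 6, (x, u) ∈ D := by
      rcases H2 with h | ⟨j, hj, -⟩
      · exact ⟨2, h⟩
      · exact ⟨j, hj⟩
    have g : ∀ i : Fin 6, ((x, i) ∈ D ∨ ∃ j : Fin 6, (x, j) ∈ D ∧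
        ((t x = true ∧ (tadpoleGraph 4 2).Adj i j) ∨
         (t x = false ∧ (tadpoleGraph 5 1).Adj i j))) →
        (i = u ∨ (tadpoleGraph 4 2).Adj i u) := by
      rintro i (h | ⟨j, hj, ⟨-, ha⟩ | ⟨hf, -⟩⟩)
      · exact Or.inl (by simpa using hcon (x, i) h (x, u) hu rfl rfl)
      · have hju : j = u := by simpa using hcon (x, j) hj (x, u) hu rfl rfl
        exact Or.inr (hju ▸ ha)
      · rw [ht] at hf; exact absurd hf (by simp)
    exact d42_dom u ⟨g 0 H0, g 1 H1, g 2 H2, g 3 H3⟩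
  | false =>
    have hnb : ∀ i : Fin 6, i ≠ 0 → i ≠ 5 →
        (∀ j : Fin 6, ((t x = true ∧ (tadpoleGraph 4 2).Adj i j) ∨
          (t x = false ∧ (tadpoleGraph 5 1).Adj i j)) → j ≠ 5) := by
      intro i hi0 hi5 j h
      rcases h with ⟨hf, -⟩ | ⟨-, ha⟩
      · rw [ht] at hf; exact absurd hf (by simp)
      · exact d51_nb i j hi0 hi5 ha
    have H1 := key 1 (by decide) (hnb 1 (by decide) (by decide))
    have H2 := key 2 (by decide) (hnb 2 (by decide) (by decide))
    have H3 := key 3 (by decide) (hnb 3 (by decide) (by decide))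
    have H4 := key 4 (by decide) (hnb 4 (by decide) (by decide))
    obtain ⟨u, hu⟩ : ∃ u : Fin 6, (x, u) ∈ D := by
      rcases H2 with h | ⟨j, hj, -⟩
      · exact ⟨2, h⟩
      · exact ⟨j, hj⟩
    have g : ∀ i : Fin 6, ((x, i) ∈ D ∨ ∃ j : Fin 6, (x, j) ∈ D ∧
        ((t x = true ∧ (tadpoleGraph 4 2).Adj i j) ∨
         (t x = false ∧ (tadpoleGraph 5 1).Adj i j))) →
        (i = u ∨ (tadpoleGraph 5 1).Adj i u) := by
      rintro i (h | ⟨j, hj, ⟨hf, -⟩ | ⟨-, ha⟩⟩)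
      · exact Or.inl (by simpa using hcon (x, i) h (x, u) hu rfl rfl)
      · rw [ht] at hf; exact absurd hf (by simp)
      · have hju : j = u := by simpa using hcon (x, j) hj (x, u) hu rfl rfl
        exact Or.inr (hju ▸ ha)
    exact d51_dom u ⟨g 1 H1, g 2 H2, g 3 H3, g 4 H4⟩

lemma lower [Fintype V] {D : Set (V × Fin 6)}
    (hD : IsDisjDomSet (glueGadgets F t) D) : 2 * Fintype.card V ≤ D.ncard := by
  classical
  rw [Set.ncard_eq_toFinset_card' D]
  rw [Finset.card_eq_sum_card_fiberwise
    (f := fun p : V × Fin 6 => p.1) (t := Finset.univ) (fun p _ => Finset.mem_univ p.1)]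
  have hfib : ∀ x : V, 2 ≤ (D.toFinset.filter (fun p => p.1 = x)).card := by
    intro x
    obtain ⟨p, hp, q, hq, hpx, hqx, hne⟩ := two_in_copy hD x
    have : 1 < (D.toFinset.filter (fun p => p.1 = x)).card := by
      refine Finset.one_lt_card.mpr ⟨p, ?_, q, ?_, hne⟩ <;>
        simp [Set.mem_toFinset, hp, hq, hpx, hqx]
    omega
  calc 2 * Fintype.card V = ∑ _x : V, 2 := by
        simp [Finset.sum_const, Finset.card_univ, mul_comm]
    _ ≤ _ := Finset.sum_le_sum fun x _ => hfib x

def pf : Bool → Fin 6 := fun b => Bool.rec 0 2 b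
def pg : Bool → Fin 6 := fun b => Bool.rec 2 4 b

lemma upper [Fintype V] (F : SimpleGraph V) (t : V → Bool) :
    ∃ D : Set (V × Fin 6), IsDisjDomSet (glueGadgets F t) D ∧
      D.ncard = 2 * Fintype.card V := by
  classical
  set B : Finset (V × Fin 6) :=
    Finset.univ.biUnion (fun x => {(x, pf (t x)), (x, pg (t x))}) with hB
  refine ⟨↑B, ?_, ?_⟩
  · rintro ⟨x, i⟩ hv
    left
    have hvB : i ≠ pf (t x) ∧ i ≠ pg (t x) := by
      constructor <;> intro h <;> apply hv <;>
        · rw [Finset.mem_coe, hB, Finset.mem_biUnion]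
          exact ⟨x, Finset.mem_univ x, by simp [h]⟩
    have hmem : ∀ j : Fin 6, (j = pf (t x) ∨ j = pg (t x)) → ((x, j) : V × Fin 6) ∈ (B : Set (V × Fin 6)) := by
      intro j hj
      rw [Finset.mem_coe, hB, Finset.mem_biUnion]
      exact ⟨x, Finset.mem_univ x, by rcases hj with h | h <;> simp [h]⟩
    have hadj : ∀ j : Fin 6, i ≠ j →
        ((t x = true ∧ (tadpoleGraph 4 2).Adj i j) ∨
         (t x = false ∧ (tadpoleGraph 5 1).Adj i j)) →
        (glueGadgets F t).Adj (x, i) (x, j) := by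
      intro j hij hr
      rw [glue_adj]
      exact ⟨by simp [hij], Or.inr ⟨rfl, hr⟩⟩
    cases ht : t x with
    | true =>
      rw [ht] at hvB hmem
      fin_cases i
      · exact ⟨(x, 4), hmem 4 (Or.inr rfl), hadj 4 (by decide)
          (Or.inl ⟨ht, by rw [tadpoleGraph, SimpleGraph.fromRel_adj]; decide⟩)⟩
      · exact ⟨(x, 2), hmem 2 (Or.inl rfl), hadj 2 (by decide)
          (Or.inl ⟨ht, by rw [tadpoleGraph, SimpleGraph.fromRel_adj]; decide⟩)⟩
      · exact absurd rfl hvB.1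
      · exact ⟨(x, 2), hmem 2 (Or.inl rfl), hadj 2 (by decide)
          (Or.inl ⟨ht, by rw [tadpoleGraph, SimpleGraph.fromRel_adj]; decide⟩)⟩
      · exact absurd rfl hvB.2
      · exact ⟨(x, 4), hmem 4 (Or.inr rfl), hadj 4 (by decide)
          (Or.inl ⟨ht, by rw [tadpoleGraph, SimpleGraph.fromRel_adj]; decide⟩)⟩
    | false =>
      rw [ht] at hvB hmem
      fin_cases i
      · exact absurd rfl hvB.1
      · exact ⟨(x, 2), hmem 2 (Or.inr rfl), hadj 2 (by decide)
          (Or.inr ⟨ht, by rw [tadpoleGraph, SimpleGraph.fromRel_adj]; decide⟩)⟩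
      · exact absurd rfl hvB.2
      · exact ⟨(x, 2), hmem 2 (Or.inr rfl), hadj 2 (by decide)
          (Or.inr ⟨ht, by rw [tadpoleGraph, SimpleGraph.fromRel_adj]; decide⟩)⟩
      · exact ⟨(x, 0), hmem 0 (Or.inl rfl), hadj 0 (by decide)
          (Or.inr ⟨ht, by rw [tadpoleGraph, SimpleGraph.fromRel_adj]; decide⟩)⟩
      · exact ⟨(x, 0), hmem 0 (Or.inl rfl), hadj 0 (by decide)
          (Or.inr ⟨ht, by rw [tadpoleGraph, SimpleGraph.fromRel_adj]; decide⟩)⟩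
  · rw [Set.ncard_coe_finset, hB]
    rw [Finset.card_biUnion (by
      intro x _ y _ hxy
      simp only [Finset.disjoint_left, Finset.mem_insert, Finset.mem_singleton]
      intro a ha hb
      rcases ha with rfl | rfl <;> rcases hb with h | h <;>
        exact absurd (congrArg Prod.fst h) hxy)]
    have hc : ∀ x : V, ({(x, pf (t x)), (x, pg (t x))} : Finset (V × Fin 6)).card = 2 := by
      intro x
      have hne : ((x, pf (t x)) : V × Fin 6) ≠ (x, pg (t x)) := by
        intro h
        have h2 : pf (t x) = pg (t x) := (Prod.ext_iff.mp h).2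
        cases hb : t x <;> rw [hb] at h2 <;> exact absurd h2 (by decide)
      rw [Finset.card_insert_of_notMem (Finset.notMem_singleton.mpr hne),
        Finset.card_singleton]
    simp [hc, Finset.sum_const, Finset.card_univ, mul_comm]

end DisjAux

/-- If `F` is any connected graph of order at least `2` and `G_F` is obtained from `F` by
identifying the leaf of a copy of `C_{4,2}` or `C_{5,1}` with each vertex of `F`, then
`γ₂ᵈ(G_F) = |V(G_F)|/3`. -/
theorem disjDomNum_glueGadgets_eq {V : Type*} [Fintype V] (F : SimpleGraph V)
    (t : V → Bool) (hconn : F.Connected) (h2 : 2 ≤ Fintype.card V) :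
    (disjDomNum (glueGadgets F t) : ℝ) = (Fintype.card (V × Fin 6) : ℝ) / 3 := by
  classical
  obtain ⟨D₀, hdom, hcard⟩ := DisjAux.upper F t
  have hmem : 2 * Fintype.card V ∈
      {n : ℕ | ∃ D : Set (V × Fin 6), IsDisjDomSet (glueGadgets F t) D ∧ D.ncard = n} :=
    ⟨D₀, hdom, hcard⟩
  have hval : disjDomNum (glueGadgets F t) = 2 * Fintype.card V := by
    refine le_antisymm (Nat.sInf_le hmem) (le_csInf ⟨_, hmem⟩ ?_)
    rintro n ⟨D, hD, rfl⟩
    exact DisjAux.lower hD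
  rw [hval, Fintype.card_prod, Fintype.card_fin]
  push_cast
  field_simp
  ring
end

section
/- Let F be any connected graph of order at least 2, and let G_F be the graph obtained from F by, for each vertex xᵢ of F, identifying the leaf of a graph Tᵢ isomorphic to C_{4,2} or C_{5,1} with xᵢ. Then for every disjunctive dominating set S of G_F and every i, the set S contains at least two vertices of V(Tᵢ) (the 6-vertex copy including the identified vertex xᵢ); consequently γ₂ᵈ(G_F) ≥ |V(G_F)|/3. -/
instance tadDec (s k : ℕ) : DecidableRel (tadpoleGraph s k).Adj := fun a b =>
  decidable_of_iff' _ (SimpleGraph.fromRel_adj _ a b)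

def gad : Bool → SimpleGraph (Fin 6)
  | true => tadpoleGraph 4 2
  | false => tadpoleGraph 5 1

instance gadDec (b : Bool) : DecidableRel (gad b).Adj := by
  cases b <;> exact tadDec _ _

lemma glue_adj_char {V : Type*} (F : SimpleGraph V) (t : V → Bool) (x : V) (i : Fin 6)
    (hi : i ≠ 5) (u : V × Fin 6) (h : (glueGadgets F t).Adj (x, i) u) :
    u.1 = x ∧ (gad (t x)).Adj i u.2 := by
  rw [glueGadgets, SimpleGraph.fromRel_adj] at h
  obtain ⟨hne, h | h⟩ := h
  · rcases h with ⟨h5, _, _⟩ | ⟨heq, h⟩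
    · exact absurd h5 hi
    · refine ⟨heq.symm, ?_⟩
      rcases h with ⟨ht, h⟩ | ⟨ht, h⟩ <;> simp_all [gad]
  · rcases h with ⟨_, h5, _⟩ | ⟨heq, h⟩
    · exact absurd h5 hi
    · refine ⟨heq, ?_⟩
      subst heq
      rcases h with ⟨ht, h⟩ | ⟨ht, h⟩ <;> simp only [gad, ht] <;> exact h.symm

lemma exists_mid {W : Type*} (G : SimpleGraph W) {v u : W} (h : G.dist v u = 2) :
    ∃ m, G.Adj v m ∧ G.Adj m u := by
  obtain ⟨p, hp⟩ := SimpleGraph.exists_walk_of_dist_ne_zero (by omega : G.dist v u ≠ 0)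
  rw [h] at hp
  cases p with
  | nil => simp at hp
  | cons h1 q =>
    cases q with
    | nil => simp at hp
    | cons h2 q2 =>
      cases q2 with
      | nil => exact ⟨_, h1, h2⟩
      | cons h3 q3 => simp [SimpleGraph.Walk.length_cons] at hp

lemma key {V : Type*} (F : SimpleGraph V) (t : V → Bool) (S : Set (V × Fin 6))
    (hS : IsDisjDomSet (glueGadgets F t) S) (x : V)
    (i : Fin 6) (hi : i ≠ 5) (h5 : ∀ j, (gad (t x)).Adj i j → j ≠ 5) :
    (∃ u ∈ S, u.1 = x ∧ (u.2 = i ∨ (gad (t x)).Adj i u.2)) ∨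
    (∃ u ∈ S, ∃ w ∈ S, u ≠ w ∧ u.1 = x ∧ w.1 = x) := by
  by_cases hv : (x, i) ∈ S
  · exact Or.inl ⟨(x,i), hv, rfl, Or.inl rfl⟩
  rcases hS (x,i) hv with ⟨u, hu, hadj⟩ | ⟨u, hu, w, hw, hne, hdu, hdw⟩
  · obtain ⟨h1, h2⟩ := glue_adj_char F t x i hi u hadj
    exact Or.inl ⟨u, hu, h1, Or.inr h2⟩
  · have step : ∀ z : V × Fin 6, (glueGadgets F t).dist (x, i) z = 2 → z.1 = x := by
      intro z hz
      obtain ⟨m, hm1, hm2⟩ := exists_mid _ hz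
      obtain ⟨hmx, hmadj⟩ := glue_adj_char F t x i hi m hm1
      have hm5 : m.2 ≠ 5 := h5 _ hmadj
      have : (glueGadgets F t).Adj (m.1, m.2) z := by rwa [Prod.mk.eta]
      have := glue_adj_char F t m.1 m.2 hm5 z this
      rw [hmx] at this
      exact this.1
    exact Or.inr ⟨u, hu, w, hw, hne, step u hdu, step w hdw⟩

lemma two_in_copy {V : Type*} (F : SimpleGraph V) (t : V → Bool) (S : Set (V × Fin 6))
    (hS : IsDisjDomSet (glueGadgets F t) S) (x : V) :
    ∃ u ∈ S, ∃ w ∈ S, u ≠ w ∧ u.1 = x ∧ w.1 = x := by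
  have pair : ∀ (a c : V × Fin 6), a ∈ S → c ∈ S → a.1 = x → c.1 = x → a.2 ≠ c.2 →
      ∃ u ∈ S, ∃ w ∈ S, u ≠ w ∧ u.1 = x ∧ w.1 = x := by
    intro a c ha hc hax hcx hne
    exact ⟨a, ha, c, hc, fun h => hne (congrArg Prod.snd h), hax, hcx⟩
  cases htx : t x with
  | true =>
    rcases key F t S hS x 2 (by decide) (by rw [htx]; decide) with ⟨a, ha, hax, hcase⟩ | hdone
    · rw [htx] at hcase
      have h123 := (show ∀ j : Fin 6, (j = 2 ∨ (gad true).Adj 2 j) → (j = 1 ∨ j = 2 ∨ j = 3)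
        by decide) a.2 hcase
      rcases h123 with h1 | h2 | h3
      · -- second vertex i₁ = 3
        rcases key F t S hS x 3 (by decide) (by rw [htx]; decide) with ⟨c, hc, hcx, hcc⟩ | hdone
        · rw [htx] at hcc
          refine pair a c ha hc hax hcx ?_
          have := (show ∀ j : Fin 6, (j = 3 ∨ (gad true).Adj 3 j) → j ≠ 1 by decide) c.2 hcc
          rw [h1]; exact fun h => this h.symm
        · exact hdone
      · rcases key F t S hS x 0 (by decide) (by rw [htx]; decide) with ⟨c, hc, hcx, hcc⟩ | hdone
        · rw [htx] at hcc
          refine pair a c ha hc hax hcx ?_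
          have := (show ∀ j : Fin 6, (j = 0 ∨ (gad true).Adj 0 j) → j ≠ 2 by decide) c.2 hcc
          rw [h2]; exact fun h => this h.symm
        · exact hdone
      · rcases key F t S hS x 1 (by decide) (by rw [htx]; decide) with ⟨c, hc, hcx, hcc⟩ | hdone
        · rw [htx] at hcc
          refine pair a c ha hc hax hcx ?_
          have := (show ∀ j : Fin 6, (j = 1 ∨ (gad true).Adj 1 j) → j ≠ 3 by decide) c.2 hcc
          rw [h3]; exact fun h => this h.symm
        · exact hdone
    · exact hdone
  | false =>
    rcases key F t S hS x 2 (by decide) (by rw [htx]; decide) with ⟨a, ha, hax, hcase⟩ | hdone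
    · rw [htx] at hcase
      have h123 := (show ∀ j : Fin 6, (j = 2 ∨ (gad false).Adj 2 j) → (j = 1 ∨ j = 2 ∨ j = 3)
        by decide) a.2 hcase
      rcases h123 with h1 | h2 | h3
      · rcases key F t S hS x 3 (by decide) (by rw [htx]; decide) with ⟨c, hc, hcx, hcc⟩ | hdone
        · rw [htx] at hcc
          refine pair a c ha hc hax hcx ?_
          have := (show ∀ j : Fin 6, (j = 3 ∨ (gad false).Adj 3 j) → j ≠ 1 by decide) c.2 hcc
          rw [h1]; exact fun h => this h.symm
        · exact hdone
      · rcases key F t S hS x 4 (by decide) (by rw [htx]; decide) with ⟨c, hc, hcx, hcc⟩ | hdone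
        · rw [htx] at hcc
          refine pair a c ha hc hax hcx ?_
          have := (show ∀ j : Fin 6, (j = 4 ∨ (gad false).Adj 4 j) → j ≠ 2 by decide) c.2 hcc
          rw [h2]; exact fun h => this h.symm
        · exact hdone
      · rcases key F t S hS x 1 (by decide) (by rw [htx]; decide) with ⟨c, hc, hcx, hcc⟩ | hdone
        · rw [htx] at hcc
          refine pair a c ha hc hax hcx ?_
          have := (show ∀ j : Fin 6, (j = 1 ∨ (gad false).Adj 1 j) → j ≠ 3 by decide) c.2 hcc
          rw [h3]; exact fun h => this h.symm
        · exact hdone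
    · exact hdone


/-- If `F` is any connected graph of order at least `2` and `G_F` is obtained from `F` by
identifying the leaf of a copy `Tₓ` of `C_{4,2}` or `C_{5,1}` with each vertex `x` of `F`,
then every disjunctive dominating set `S` of `G_F` contains at least two vertices of each
copy `Tₓ = {x} × Fin 6`; consequently `γ₂ᵈ(G_F) ≥ |V(G_F)|/3`. -/
theorem disjDomNum_glueGadgets_ge {V : Type*} [Fintype V] (F : SimpleGraph V)
    (t : V → Bool) (hconn : F.Connected) (h2 : 2 ≤ Fintype.card V) :
    (∀ S : Set (V × Fin 6), IsDisjDomSet (glueGadgets F t) S →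
      ∀ x : V, 2 ≤ (S ∩ {p : V × Fin 6 | p.1 = x}).ncard) ∧
    (Fintype.card (V × Fin 6) : ℝ) / 3 ≤ (disjDomNum (glueGadgets F t) : ℝ) := by
  classical
  have hpart : ∀ S : Set (V × Fin 6), IsDisjDomSet (glueGadgets F t) S →
      ∀ x : V, 2 ≤ (S ∩ {p : V × Fin 6 | p.1 = x}).ncard := by
    intro S hS x
    obtain ⟨u, hu, w, hw, hne, hux, hwx⟩ := two_in_copy F t S hS x
    have hfin : (S ∩ {p : V × Fin 6 | p.1 = x}).Finite := Set.toFinite _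
    rw [show (2 : ℕ) = 1 + 1 from rfl, Nat.add_one_le_iff]
    rw [Set.one_lt_ncard_iff hfin]
    exact ⟨u, w, ⟨hu, hux⟩, ⟨hw, hwx⟩, hne⟩
  refine ⟨hpart, ?_⟩
  -- every disjunctive dominating set has at least 2 * card V elements
  have hbound : ∀ D : Set (V × Fin 6), IsDisjDomSet (glueGadgets F t) D →
      2 * Fintype.card V ≤ D.ncard := by
    intro D hD
    have hfin : D.Finite := Set.toFinite _
    rw [Set.ncard_eq_toFinset_card' D]
    rw [Finset.card_eq_sum_card_fiberwise
      (f := fun p : V × Fin 6 => p.1) (t := Finset.univ) (fun _ _ => Finset.mem_univ _)]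
    calc 2 * Fintype.card V = ∑ _x : V, 2 := by
          rw [Finset.sum_const, Finset.card_univ, smul_eq_mul, mul_comm]
      _ ≤ ∑ x : V, (D.toFinset.filter (fun p => p.1 = x)).card := by
          apply Finset.sum_le_sum
          intro x _
          have h2x := hpart D hD x
          have : (D ∩ {p : V × Fin 6 | p.1 = x}).toFinset =
              D.toFinset.filter (fun p => p.1 = x) := by
            ext p; simp
          rw [Set.ncard_eq_toFinset_card', this] at h2x
          exact h2x
  have hne : {n : ℕ | ∃ D : Set (V × Fin 6), IsDisjDomSet (glueGadgets F t) D ∧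
      D.ncard = n}.Nonempty := by
    refine ⟨(Set.univ : Set (V × Fin 6)).ncard, Set.univ, ?_, rfl⟩
    intro v hv; exact absurd (Set.mem_univ v) hv
  have hmem := Nat.sInf_mem hne
  obtain ⟨D, hD, hDcard⟩ := hmem
  have h1 : 2 * Fintype.card V ≤ disjDomNum (glueGadgets F t) := by
    rw [disjDomNum, ← hDcard]; exact hbound D hD
  have hcard : Fintype.card (V × Fin 6) = Fintype.card V * 6 := by
    simp [Fintype.card_prod]
  rw [div_le_iff₀ (by norm_num : (0:ℝ) < 3), hcard]
  have := (Nat.cast_le (α := ℝ)).mpr h1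
  push_cast at this ⊢
  linarith
end

section
/- Let G be a graph containing an induced 4-cycle C = x–c₁–u–c₃–x in which the three vertices c₁, u, c₃ all have degree 2 in G, and let G′ = G − {c₁, u, c₃} be the graph obtained by deleting these three vertices. Then γ₂ᵈ(G) ≤ γ₂ᵈ(G′) + 1. -/
/-- Distance 2 in an induced subgraph implies distance 2 in the ambient graph. -/
lemma dist_induce_two {V : Type*} (G : SimpleGraph V) (S : Set V) (a b : S)
    (h : (G.induce S).dist a b = 2) : G.dist a.val b.val = 2 := by
  obtain ⟨p, hp⟩ := SimpleGraph.exists_walk_of_dist_ne_zero (by omega : (G.induce S).dist a b ≠ 0)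
  have hle : G.dist a.val b.val ≤ 2 := by
    have := SimpleGraph.dist_le (p.map (SimpleGraph.Embedding.induce S).toHom)
    rwa [SimpleGraph.Walk.length_map, hp, h] at this
  have hab : a.val ≠ b.val := by
    intro hv
    have : a = b := Subtype.ext hv
    subst this
    simp [SimpleGraph.dist_self] at h
  have hreach : G.Reachable a.val b.val :=
    ⟨p.map (SimpleGraph.Embedding.induce S).toHom⟩
  have h0 : G.dist a.val b.val ≠ 0 :=
    SimpleGraph.dist_ne_zero_iff_ne_and_reachable.mpr ⟨hab, hreach⟩
  have h1 : G.dist a.val b.val ≠ 1 := by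
    intro h1
    have hadj : G.Adj a.val b.val := SimpleGraph.dist_eq_one_iff_adj.mp h1
    have : (G.induce S).Adj a b := hadj
    have := SimpleGraph.dist_eq_one_iff_adj.mpr this
    omega
  omega

/-- If `G` contains an induced `4`-cycle `x – c₁ – u – c₃ – x` whose three vertices
`c₁, u, c₃` all have degree `2` in `G`, and `G' = G − {c₁, u, c₃}`, then
`γ₂ᵈ(G) ≤ γ₂ᵈ(G') + 1`. -/
theorem disjDomNum_le_of_pendant_four_cycle {V : Type*} [Fintype V] [DecidableEq V]
    (G : SimpleGraph V) [DecidableRel G.Adj] (x c₁ u c₃ : V)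
    (hxu : x ≠ u) (hc : c₁ ≠ c₃)
    (a1 : G.Adj x c₁) (a2 : G.Adj c₁ u) (a3 : G.Adj u c₃) (a4 : G.Adj c₃ x)
    (n1 : ¬ G.Adj x u) (n2 : ¬ G.Adj c₁ c₃)
    (d1 : G.degree c₁ = 2) (d2 : G.degree u = 2) (d3 : G.degree c₃ = 2) :
    disjDomNum G ≤ disjDomNum (G.induce ({c₁, u, c₃}ᶜ : Set V)) + 1 := by
  set S : Set V := ({c₁, u, c₃}ᶜ : Set V) with hS
  set G' := G.induce S with hG'
  have hne : {n : ℕ | ∃ D : Set S, IsDisjDomSet G' D ∧ D.ncard = n}.Nonempty :=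
    ⟨(Set.univ : Set S).ncard, Set.univ, fun v hv => absurd (Set.mem_univ v) hv, rfl⟩
  obtain ⟨D', hD', hcard⟩ := Nat.sInf_mem hne
  set D : Set V := (Subtype.val '' D') ∪ {u} with hD
  have huD : u ∈ D := Or.inr rfl
  have hDdom : IsDisjDomSet G D := by
    intro v hv
    by_cases hvS : v ∈ S
    · -- v is a vertex of G'
      have hvD' : (⟨v, hvS⟩ : S) ∉ D' := by
        intro h
        exact hv (Or.inl ⟨⟨v, hvS⟩, h, rfl⟩)
      rcases hD' ⟨v, hvS⟩ hvD' with ⟨d, hd, hadj⟩ | ⟨d, hd, w, hw, hdw, h2d, h2w⟩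
      · exact Or.inl ⟨d.val, Or.inl ⟨d, hd, rfl⟩, hadj⟩
      · refine Or.inr ⟨d.val, Or.inl ⟨d, hd, rfl⟩, w.val, Or.inl ⟨w, hw, rfl⟩, ?_, ?_, ?_⟩
        · exact fun h => hdw (Subtype.ext h)
        · exact dist_induce_two G S _ _ h2d
        · exact dist_induce_two G S _ _ h2w
    · -- v ∈ {c₁, u, c₃}
      have hv3 : v = c₁ ∨ v = u ∨ v = c₃ := by
        have h := hvS
        simp [hS] at h
        tauto
      rcases hv3 with rfl | rfl | rfl
      · exact Or.inl ⟨u, huD, a2⟩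
      · exact absurd huD hv
      · exact Or.inl ⟨u, huD, a3.symm⟩
  have h1 : disjDomNum G ≤ D.ncard := Nat.sInf_le ⟨D, hDdom, rfl⟩
  have h2 : D.ncard ≤ D'.ncard + 1 := by
    calc D.ncard ≤ (Subtype.val '' D').ncard + ({u} : Set V).ncard := Set.ncard_union_le _ _
    _ = D'.ncard + 1 := by
        rw [Set.ncard_image_of_injective _ Subtype.val_injective, Set.ncard_singleton]
  have h3 : disjDomNum G' = D'.ncard := hcard.symm
  omega
end

section
/- Let G be a graph with minimum degree δ(G) ≥ 2, and suppose G has a vertex a such that exactly two vertices b₁ and b₂ lie outside the closed neighborhood N[a], and b₁ and b₂ are not adjacent. Then γ₂ᵈ(G) ≤ 2; indeed there exist two vertices in N(a) forming a disjunctive dominating set of G. -/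
private lemma dist_eq_two_aux {V : Type*} {G : SimpleGraph V} {x m y : V}
    (h1 : G.Adj x m) (h2 : G.Adj m y) (hne : x ≠ y) (hnadj : ¬ G.Adj x y) :
    G.dist x y = 2 := by
  let w : G.Walk x y := SimpleGraph.Walk.cons h1 (SimpleGraph.Walk.cons h2 SimpleGraph.Walk.nil)
  have hle : G.dist x y ≤ 2 := by
    have := SimpleGraph.dist_le w
    simpa [w] using this
  have h0 : G.dist x y ≠ 0 := fun h => hne (w.reachable.dist_eq_zero_iff.mp h)
  have h1' : G.dist x y ≠ 1 := fun h => hnadj (SimpleGraph.dist_eq_one_iff_adj.mp h)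
  omega

/-- Let `G` be a graph with minimum degree at least `2` having a vertex `a` such that
exactly two vertices `b₁`, `b₂` lie outside the closed neighborhood `N[a]`, with `b₁`
and `b₂` non-adjacent.  Then there exist two vertices of `N(a)` forming a disjunctive
dominating set of `G`; in particular `γ₂ᵈ(G) ≤ 2`. -/
theorem disjDomNum_le_two_of_two_outside {V : Type*} [Fintype V] (G : SimpleGraph V)
    (hdeg : ∀ v : V, 2 ≤ (G.neighborSet v).ncard)
    (a b₁ b₂ : V) (hb : b₁ ≠ b₂)
    (hout : ((insert a (G.neighborSet a))ᶜ : Set V) = {b₁, b₂})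
    (hnadj : ¬ G.Adj b₁ b₂) :
    (∃ c ∈ G.neighborSet a, ∃ d ∈ G.neighborSet a, c ≠ d ∧
      IsDisjDomSet G {c, d}) ∧ disjDomNum G ≤ 2 := by
  -- vertices other than b₁, b₂ are in the closed neighborhood of a
  have hmem : ∀ v : V, v ≠ b₁ → v ≠ b₂ → v ∈ insert a (G.neighborSet a) := by
    intro v h1 h2
    by_contra h
    have : v ∈ ((insert a (G.neighborSet a))ᶜ : Set V) := h
    rw [hout] at this
    rcases this with h | h
    · exact h1 h
    · exact h2 h
  -- b₁ and b₂ are not adjacent to a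
  have hb₁out : b₁ ∉ insert a (G.neighborSet a) := by
    intro h
    have : b₁ ∈ ((insert a (G.neighborSet a))ᶜ : Set V) := by rw [hout]; left; rfl
    exact this h
  have hb₂out : b₂ ∉ insert a (G.neighborSet a) := by
    intro h
    have : b₂ ∈ ((insert a (G.neighborSet a))ᶜ : Set V) := by rw [hout]; right; rfl
    exact this h
  -- all neighbors of b₁ and of b₂ are neighbors of a
  have hsub : ∀ b : V, b ∉ insert a (G.neighborSet a) → ¬ G.Adj b₁ b₂ → b = b₁ ∨ b = b₂ →
      G.neighborSet b ⊆ G.neighborSet a := by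
    intro b hbout hnadj' hbor u hu
    have hadj : G.Adj b u := hu
    have hub : u ≠ b₁ := by
      rintro rfl
      rcases hbor with rfl | rfl
      · exact G.irrefl hadj
      · exact hnadj' (hadj.symm)
    have hub₂ : u ≠ b₂ := by
      rintro rfl
      rcases hbor with rfl | rfl
      · exact hnadj' hadj
      · exact G.irrefl hadj
    have := hmem u hub hub₂
    rcases this with rfl | h
    · exact absurd (Set.mem_insert_iff.mpr (Or.inr hadj.symm)) hbout
    · exact h
  have hsub₁ : G.neighborSet b₁ ⊆ G.neighborSet a := hsub b₁ hb₁out hnadj (Or.inl rfl)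
  have hsub₂ : G.neighborSet b₂ ⊆ G.neighborSet a := hsub b₂ hb₂out hnadj (Or.inr rfl)
  -- pick c a neighbor of b₁, and d ≠ c a neighbor of b₂
  obtain ⟨c, hc⟩ : (G.neighborSet b₁).Nonempty := by
    rcases Set.eq_empty_or_nonempty (G.neighborSet b₁) with h | h
    · have := hdeg b₁; rw [h] at this; simp at this
    · exact h
  obtain ⟨d, hd, hdc⟩ : ∃ d, d ∈ G.neighborSet b₂ ∧ d ≠ c :=
    Set.exists_ne_of_one_lt_ncard (by have := hdeg b₂; omega) c
  have hca : c ∈ G.neighborSet a := hsub₁ hc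
  have hda : d ∈ G.neighborSet a := hsub₂ hd
  have hcd : c ≠ d := hdc.symm
  have hDD : IsDisjDomSet G {c, d} := by
    intro v hv
    have hvc : v ≠ c := fun h => hv (by rw [h]; left; rfl)
    have hvd : v ≠ d := fun h => hv (by rw [h]; right; rfl)
    by_cases hadjc : G.Adj v c
    · exact Or.inl ⟨c, Or.inl rfl, hadjc⟩
    by_cases hadjd : G.Adj v d
    · exact Or.inl ⟨d, Or.inr rfl, hadjd⟩
    -- v is not b₁ (else adjacent to c) nor b₂ (else adjacent to d)
    have hvb₁ : v ≠ b₁ := by rintro rfl; exact hadjc hc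
    have hvb₂ : v ≠ b₂ := by rintro rfl; exact hadjd hd
    have hva : v ≠ a := by rintro rfl; exact hadjc hca
    have hvN : v ∈ G.neighborSet a := by
      rcases hmem v hvb₁ hvb₂ with rfl | h
      · exact absurd rfl hva
      · exact h
    have hav : G.Adj v a := (hvN : G.Adj a v).symm
    refine Or.inr ⟨c, Or.inl rfl, d, Or.inr rfl, hcd, ?_, ?_⟩
    · exact dist_eq_two_aux hav hca hvc hadjc
    · exact dist_eq_two_aux hav hda hvd hadjd
  refine ⟨⟨c, hca, d, hda, hcd, hDD⟩, ?_⟩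
  exact Nat.sInf_le ⟨{c, d}, hDD, Set.ncard_pair hcd⟩
end

section
/- Let G be a graph with minimum degree δ(G) ≥ 2 whose vertex set is {a} ∪ N(a) ∪ {b₁, b₂, b₃}, where |N(a)| = 3, the vertices b₁, b₂, b₃ lie outside N[a], and {b₁, b₂, b₃} is an independent set. Then some two vertices of N(a) form a disjunctive dominating set of G, so γ₂ᵈ(G) ≤ 2. -/
/-! Any two neighbours `c, d` of `a` work.  They dominate `a`, and a neighbour `v` of `a`
adjacent to neither is at distance two from both through `a`.  A vertex `b` outside `N[a]` has
all its neighbours in `N(a)`, because `{b₁, b₂, b₃}` is independent; since `b` has at least two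
neighbours and only one vertex of `N(a)` lies outside `{c, d}`, `b` is adjacent to `c` or `d`. -/

namespace SimpleGraph

variable {V : Type*} (G : SimpleGraph V)

lemma dist_eq_two_of_adj_of_adj_s13 {u v w : V} (huv : G.Adj u v) (hvw : G.Adj v w) (huw : u ≠ w)
    (hnadj : ¬ G.Adj u w) : G.dist u w = 2 := by
  have hedist : G.edist u w = 2 :=
    edist_eq_two_iff.mpr ⟨huw, hnadj, v, (G.mem_commonNeighbors).mpr ⟨huv, hvw.symm⟩⟩
  simp [SimpleGraph.dist, hedist]

lemma exists_adj_mem_of_neighborSet_subset {v : V} {s D : Set V}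
    (hsub : G.neighborSet v ⊆ s) (hs : s.Finite)
    (hcard : (s \ D).ncard < (G.neighborSet v).ncard) : ∃ u ∈ D, G.Adj v u := by
  by_contra! hD
  have hsub' : G.neighborSet v ⊆ s \ D := fun u hu => ⟨hsub hu, fun huD => hD u huD hu⟩
  exact (Set.ncard_le_ncard hsub' hs.sdiff).not_gt hcard

lemma neighborSet_subset_of_univ_eq {a v : V} {B : Set V}
    (huniv : (Set.univ : Set V) = insert a (G.neighborSet a) ∪ B)
    (hva : ¬ G.Adj v a) (hvB : ∀ b ∈ B, ¬ G.Adj v b) :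
    G.neighborSet v ⊆ G.neighborSet a := by
  intro u hu
  have hu' : u ∈ insert a (G.neighborSet a) ∪ B := huniv ▸ Set.mem_univ u
  rcases hu' with (rfl | hua) | huB
  · exact absurd hu hva
  · exact hua
  · exact absurd hu (hvB u huB)

lemma isDisjDomSet_pair_of_mem_neighborSet {a c d : V}
    (hc : c ∈ G.neighborSet a) (hd : d ∈ G.neighborSet a) (hcd : c ≠ d)
    (hN : (G.neighborSet a).ncard = 3)
    (hout : ∀ v ∉ insert a (G.neighborSet a),
      G.neighborSet v ⊆ G.neighborSet a ∧ 2 ≤ (G.neighborSet v).ncard) :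
    IsDisjDomSet G {c, d} := by
  intro v hv
  have hvc : v ≠ c := fun h => hv (by simp [h])
  have hvd : v ≠ d := fun h => hv (by simp [h])
  by_cases hva : v ∈ insert a (G.neighborSet a)
  · rcases hva with rfl | hva
    · exact Or.inl ⟨c, by simp, hc⟩
    by_cases hadjc : G.Adj v c
    · exact Or.inl ⟨c, by simp, hadjc⟩
    by_cases hadjd : G.Adj v d
    · exact Or.inl ⟨d, by simp, hadjd⟩
    have hav : G.Adj v a := G.adj_symm hva
    exact Or.inr ⟨c, by simp, d, by simp, hcd,
      G.dist_eq_two_of_adj_of_adj_s13 hav hc hvc hadjc, G.dist_eq_two_of_adj_of_adj_s13 hav hd hvd hadjd⟩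
  · obtain ⟨hsub, hdeg⟩ := hout v hva
    have hcdsub : ({c, d} : Set V) ⊆ G.neighborSet a :=
      Set.insert_subset hc (Set.singleton_subset_iff.mpr hd)
    have hrest : (G.neighborSet a \ {c, d}).ncard = 1 := by
      rw [Set.ncard_sdiff hcdsub, hN, Set.ncard_pair hcd]
    refine Or.inl (G.exists_adj_mem_of_neighborSet_subset hsub ?_ (by omega))
    exact Set.finite_of_ncard_ne_zero (by omega)

lemma disjDomNum_le_ncard {D : Set V} (hD : IsDisjDomSet G D) : disjDomNum G ≤ D.ncard :=
  Nat.sInf_le ⟨D, hD, rfl⟩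

end SimpleGraph

open SimpleGraph in
theorem disjDomNum_le_two_of_three_outside_general {V : Type*} (G : SimpleGraph V)
    (hdeg : ∀ v : V, 2 ≤ (G.neighborSet v).ncard)
    (a b₁ b₂ b₃ : V)
    (hN : (G.neighborSet a).ncard = 3)
    (huniv : (Set.univ : Set V) = insert a (G.neighborSet a) ∪ {b₁, b₂, b₃})
    (hi12 : ¬ G.Adj b₁ b₂) (hi13 : ¬ G.Adj b₁ b₃) (hi23 : ¬ G.Adj b₂ b₃) :
    (∃ c ∈ G.neighborSet a, ∃ d ∈ G.neighborSet a, c ≠ d ∧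
      IsDisjDomSet G {c, d}) ∧ disjDomNum G ≤ 2 := by
  have htwo : 1 < (G.neighborSet a).ncard := by omega
  obtain ⟨c, hc, d, hd, hcd⟩ :=
    (Set.one_lt_ncard (Set.finite_of_ncard_ne_zero (by omega))).mp htwo
  have hindep : G.IsIndepSet {b₁, b₂, b₃} := by
    simp only [isIndepSet_iff, Set.pairwise_insert, Set.pairwise_singleton, Set.mem_insert_iff,
      Set.mem_singleton_iff]
    grind [G.adj_comm]
  have hout : ∀ v ∉ insert a (G.neighborSet a),
      G.neighborSet v ⊆ G.neighborSet a ∧ 2 ≤ (G.neighborSet v).ncard := by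
    intro v hv
    have hvB : v ∈ ({b₁, b₂, b₃} : Set V) := by
      have hv' : v ∈ insert a (G.neighborSet a) ∪ {b₁, b₂, b₃} := huniv ▸ Set.mem_univ v
      exact hv'.resolve_left hv
    refine ⟨G.neighborSet_subset_of_univ_eq huniv (fun h => hv (Or.inr h.symm)) ?_, hdeg v⟩
    intro b hb hvb
    exact hindep hvB hb (G.ne_of_adj hvb) hvb
  have hDD := G.isDisjDomSet_pair_of_mem_neighborSet hc hd hcd hN hout
  exact ⟨⟨c, hc, d, hd, hcd, hDD⟩,
    (G.disjDomNum_le_ncard hDD).trans (Set.ncard_pair hcd).le⟩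

/-- Let `G` be a graph with minimum degree at least `2` whose vertex set is
`{a} ∪ N(a) ∪ {b₁, b₂, b₃}`, where `|N(a)| = 3`, the vertices `b₁, b₂, b₃` lie outside
the closed neighborhood `N[a]`, and `{b₁, b₂, b₃}` is an independent set.  Then some two
vertices of `N(a)` form a disjunctive dominating set of `G`, so `γ₂ᵈ(G) ≤ 2`. -/
theorem disjDomNum_le_two_of_three_outside {V : Type*} [Fintype V] (G : SimpleGraph V)
    (hdeg : ∀ v : V, 2 ≤ (G.neighborSet v).ncard)
    (a b₁ b₂ b₃ : V)
    (hN : (G.neighborSet a).ncard = 3)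
    (huniv : (Set.univ : Set V) = insert a (G.neighborSet a) ∪ {b₁, b₂, b₃})
    (ho1 : b₁ ∉ insert a (G.neighborSet a))
    (ho2 : b₂ ∉ insert a (G.neighborSet a))
    (ho3 : b₃ ∉ insert a (G.neighborSet a))
    (hd12 : b₁ ≠ b₂) (hd13 : b₁ ≠ b₃) (hd23 : b₂ ≠ b₃)
    (hi12 : ¬ G.Adj b₁ b₂) (hi13 : ¬ G.Adj b₁ b₃) (hi23 : ¬ G.Adj b₂ b₃) :
    (∃ c ∈ G.neighborSet a, ∃ d ∈ G.neighborSet a, c ≠ d ∧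
      IsDisjDomSet G {c, d}) ∧ disjDomNum G ≤ 2 :=
  disjDomNum_le_two_of_three_outside_general G hdeg a b₁ b₂ b₃ hN huniv hi12 hi13 hi23
end
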